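/- Let p ∈ (0,1), define f : (0,∞) → ℝ by f(x) = (x/4)·( 1/((1−p)·x + p) + 1/(p·x + 1 − p) + 1/x + 1 ), and let r be the scalar-curvature function of f. Then f″(1) = −p(1−p), and as a → 0, r(a) = (6 + 36·f″(1)) − 20·p(1−p)·(14p² − 14p + 3)·a² + O(a⁴). In particular, if (7−√7)/14 < p < (7+√7)/14 then the coefficient of a² is positive and r has a strict local minimum at the origin. -/

import Mathlib

/-!
On `(0, ∞)` the hypothesis says `f x = (x/((1-p)x+p) + x/(px+1-p) + 1 + x)/4`, so `f`, `f'`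
and `f''` are explicit rational functions. At `c = (1-a)/(1+a)` the two affine denominators
become `U/(1+a)` and `V/(1+a)` with `U = 1-a+2ap`, `V = 1+a-2ap`, and `f(c) = W/(UV(1+a))` with
`W = 1-(1-2s)a²`, `s = p(1-p)`. Clearing denominators gives the exact identity
`r(a) = (6 - 36s) - 20s(14p²-14p+3)a² + a⁴ R(s, a²)` with `R` rational and regular at `a = 0`;
the `O(a⁴)` bound follows, and when the `a²` coefficient is positive it dominates the
remainder near `0`, which gives the strict local minimum.
-/

open Filter Topology Asymptotics

/-- The scalar-curvature function `r(a)` of the monotone metric on `2×2` density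
matrices induced by `f`, at the state with eigenvalues `(1±a)/2`;
here `c = (1−a)/(1+a)`. -/
noncomputable def scurv (f : ℝ → ℝ) (a : ℝ) : ℝ :=
  14*(a - 1) * (deriv f ((1-a)/(1+a)))^2 / ((1+a)^3 * (f ((1-a)/(1+a)))^2)
    + 2*(a^2 + 7*a - 6) * deriv f ((1-a)/(1+a)) / ((1+a)^2 * a * f ((1-a)/(1+a)))
    + 8*(1 - a) * iteratedDeriv 2 f ((1-a)/(1+a)) / ((1+a)^3 * f ((1-a)/(1+a)))
    + 2*(1+a) * f ((1-a)/(1+a)) / a^2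
    + (3*a^3 + 5*a^2 + 8*a - 4) / (2*(1+a)*a^2)

open Set

section Calculus

variable {f g g' g'' : ℝ → ℝ} {s : Set ℝ} {x : ℝ}

theorem deriv_eq_of_eqOn (hs : IsOpen s) (hfg : EqOn f g s)
    (hg : ∀ y ∈ s, HasDerivAt g (g' y) y) (hx : x ∈ s) : deriv f x = g' x := by
  rw [(hfg.eventuallyEq_of_mem (hs.mem_nhds hx)).deriv_eq, (hg x hx).deriv]

theorem iteratedDeriv_two_eq_of_eqOn (hs : IsOpen s) (hfg : EqOn f g s)
    (hg : ∀ y ∈ s, HasDerivAt g (g' y) y) (hg' : ∀ y ∈ s, HasDerivAt g' (g'' y) y)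
    (hx : x ∈ s) : iteratedDeriv 2 f x = g'' x := by
  have hderiv : EqOn (deriv f) g' s := fun y hy => deriv_eq_of_eqOn hs hfg hg hy
  rw [iteratedDeriv_succ, iteratedDeriv_one, deriv_eq_of_eqOn hs hderiv hg' hx]

variable {α β : ℝ}

theorem hasDerivAt_div_linear (h : α * x + β ≠ 0) :
    HasDerivAt (fun y => y / (α * y + β)) (β / (α * x + β) ^ 2) x := by
  refine ((hasDerivAt_id' x).fun_div ((hasDerivAt_const_mul α).add_const β) h).congr_deriv ?_
  ring

theorem hasDerivAt_const_div_linear_sq (c : ℝ) (h : α * x + β ≠ 0) :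
    HasDerivAt (fun y => c / (α * y + β) ^ 2) (-2 * α * c / (α * x + β) ^ 3) x := by
  refine ((hasDerivAt_const x c).fun_div (((hasDerivAt_const_mul α).add_const β).fun_pow 2)
    (pow_ne_zero 2 h)).congr_deriv ?_
  field_simp
  ring

end Calculus

theorem isBigO_mul_of_tendsto {α : Type*} {l : Filter α} {g Q : α → ℝ} {c : ℝ}
    (hQ : Tendsto Q l (𝓝 c)) : (fun a => g a * Q a) =O[l] g := by
  simpa using (isBigO_refl g l).mul (hQ.isBigO_one ℝ)

theorem eventually_lt_of_isBigO_sub_quadratic {r : ℝ → ℝ} {C K : ℝ} (hK : 0 < -K)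
    (hr : (fun a => r a - (C - K * a ^ 2)) =O[𝓝[≠] (0:ℝ)] fun a => a ^ 4) :
    ∀ᶠ a in 𝓝[≠] (0:ℝ), C < r a := by
  have hsmall := (hr.trans_isLittleO
    ((isLittleO_pow_pow (𝕜 := ℝ) (by norm_num : 2 < 4)).mono nhdsWithin_le_nhds)).bound
    (half_pos hK)
  filter_upwards [hsmall, self_mem_nhdsWithin] with a ha (ha0 : a ≠ 0)
  have ha2 : 0 < a ^ 2 := by positivity
  rw [Real.norm_eq_abs, Real.norm_eq_abs, abs_of_pos ha2] at ha
  nlinarith [neg_abs_le (r a - (C - K * a ^ 2)), mul_pos hK ha2]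

theorem quadratic_neg_of_between_roots {p : ℝ} (hl : (7 - Real.sqrt 7) / 14 < p)
    (hr : p < (7 + Real.sqrt 7) / 14) : 14 * p ^ 2 - 14 * p + 3 < 0 := by
  have hsq : Real.sqrt 7 ^ 2 = 7 := Real.sq_sqrt (by norm_num)
  have hfactor : 14 * p ^ 2 - 14 * p + 3
      = 14 * (p - (7 - Real.sqrt 7) / 14) * (p - (7 + Real.sqrt 7) / 14) := by
    linear_combination (1 / 14 : ℝ) * hsq
  rw [hfactor]
  exact mul_neg_of_pos_of_neg (by linarith) (by linarith)

/-- `R(s, a²)` with `s = p(1-p)` is `(r(a) - (6 - 36s) + 20s(14p²-14p+3)a²) / a⁴`; its denominator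
is `(UV)²W²`, since `UV = 1-(1-4s)a²`. -/
noncomputable def curvRemainder (s t : ℝ) : ℝ :=
  4 * s * ((-21 + 194*s - 392*s^2) + (57 - 656*s + 2400*s^2 - 2792*s^3) * t
      + (-51 + 712*s - 3612*s^2 + 7856*s^3 - 6144*s^4) * t^2
      + (15 - 250*s + 1620*s^2 - 5080*s^3 + 7680*s^4 - 4480*s^5) * t^3)
    / ((1 - (1 - 4*s) * t)^2 * (1 - (1 - 2*s) * t)^2)

theorem continuousAt_curvRemainder (s : ℝ) :
    ContinuousAt (fun a : ℝ => curvRemainder s (a ^ 2)) 0 := by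
  unfold curvRemainder
  exact ContinuousAt.div (by fun_prop) (by fun_prop) (by norm_num)

-- `U`, `V`, `W` stay opaque so that `field_simp` can clear them; they are unfolded for `ring`.
theorem curvature_identity {p a U V W : ℝ} (ha : a ≠ 0) (ha1 : 1 + a ≠ 0)
    (hU : U = 1 - a + 2*a*p) (hV : V = 1 + a - 2*a*p) (hW : W = 1 - (1 - 2*(p*(1-p))) * a^2)
    (hU0 : U ≠ 0) (hV0 : V ≠ 0) (hW0 : W ≠ 0) :
    let F := W / (U*V*(1+a))
    let F' := (p / (U/(1+a))^2 + (1-p) / (V/(1+a))^2 + 1) / 4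
    let F'' := -(p*(1-p))/2 * (1 / (U/(1+a))^3 + 1 / (V/(1+a))^3)
    14*(a - 1) * F'^2 / ((1+a)^3 * F^2) + 2*(a^2 + 7*a - 6) * F' / ((1+a)^2 * a * F)
      + 8*(1 - a) * F'' / ((1+a)^3 * F) + 2*(1+a) * F / a^2
      + (3*a^3 + 5*a^2 + 8*a - 4) / (2*(1+a)*a^2)
      = (6 - 36*(p*(1-p))) - 20*p*(1-p)*(14*p^2 - 14*p + 3) * a^2
        + a^4 * curvRemainder (p*(1-p)) (a^2) := by
  intro F F' F''
  have hUV : 1 - (1 - 4*(p*(1-p))) * a^2 = U * V := by rw [hU, hV]; ring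
  simp only [F, F', F'', curvRemainder]
  rw [hUV, ← hW]
  field_simp
  subst hU hV hW
  ring

noncomputable def fourAtom (p x : ℝ) : ℝ :=
  (x / ((1 - p) * x + p) + x / (p * x + (1 - p)) + 1 + x) / 4

noncomputable def fourAtomDeriv (p x : ℝ) : ℝ :=
  (p / ((1 - p) * x + p) ^ 2 + (1 - p) / (p * x + (1 - p)) ^ 2 + 1) / 4

noncomputable def fourAtomDeriv2 (p x : ℝ) : ℝ :=
  -(p * (1 - p)) / 2 * (1 / ((1 - p) * x + p) ^ 3 + 1 / (p * x + (1 - p)) ^ 3)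

section FourAtom

variable {f : ℝ → ℝ} {p x : ℝ}

theorem eqOn_fourAtom
    (hf : ∀ x > (0:ℝ), f x = x/4 * (1/((1-p)*x + p) + 1/(p*x + 1 - p) + 1/x + 1)) :
    EqOn f (fourAtom p) (Ioi 0) := by
  intro x (hx : 0 < x)
  rw [hf x hx, fourAtom, add_sub_assoc]
  field_simp

theorem hasDerivAt_fourAtom (hu : (1 - p) * x + p ≠ 0) (hv : p * x + (1 - p) ≠ 0) :
    HasDerivAt (fourAtom p) (fourAtomDeriv p x) x := by
  refine ((((hasDerivAt_div_linear hu).add (hasDerivAt_div_linear hv)).add_const 1).add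
    (hasDerivAt_id' x)).div_const 4 |>.congr_deriv ?_
  rw [fourAtomDeriv]

theorem hasDerivAt_fourAtomDeriv (hu : (1 - p) * x + p ≠ 0) (hv : p * x + (1 - p) ≠ 0) :
    HasDerivAt (fourAtomDeriv p) (fourAtomDeriv2 p x) x := by
  refine (((hasDerivAt_const_div_linear_sq p hu).add
    (hasDerivAt_const_div_linear_sq (1 - p) hv)).add_const 1).div_const 4 |>.congr_deriv ?_
  rw [fourAtomDeriv2]
  field_simp
  ring

theorem fourAtom_denoms_pos (hp0 : 0 < p) (hp1 : p < 1) (hx : 0 < x) :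
    0 < (1 - p) * x + p ∧ 0 < p * x + (1 - p) :=
  ⟨by nlinarith, by nlinarith⟩

theorem values_of_eqOn_fourAtom (hp0 : 0 < p) (hp1 : p < 1) (hf : EqOn f (fourAtom p) (Ioi 0))
    (hx : 0 < x) :
    f x = fourAtom p x ∧ deriv f x = fourAtomDeriv p x ∧
      iteratedDeriv 2 f x = fourAtomDeriv2 p x := by
  have hderiv : ∀ y ∈ Ioi (0:ℝ), HasDerivAt (fourAtom p) (fourAtomDeriv p y) y := fun y hy =>
    have ⟨hu, hv⟩ := fourAtom_denoms_pos hp0 hp1 hy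
    hasDerivAt_fourAtom hu.ne' hv.ne'
  have hderiv2 : ∀ y ∈ Ioi (0:ℝ), HasDerivAt (fourAtomDeriv p) (fourAtomDeriv2 p y) y :=
    fun y hy =>
      have ⟨hu, hv⟩ := fourAtom_denoms_pos hp0 hp1 hy
      hasDerivAt_fourAtomDeriv hu.ne' hv.ne'
  exact ⟨hf hx, deriv_eq_of_eqOn isOpen_Ioi hf hderiv hx,
    iteratedDeriv_two_eq_of_eqOn isOpen_Ioi hf hderiv hderiv2 hx⟩

theorem scurv_eq_of_eqOn_fourAtom (hp0 : 0 < p) (hp1 : p < 1) (hf : EqOn f (fourAtom p) (Ioi 0))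
    {a : ℝ} (ha0 : a ≠ 0) (ha : a ∈ Ioo (-1) 1) :
    scurv f a = (6 - 36*(p*(1-p))) - 20*p*(1-p)*(14*p^2 - 14*p + 3) * a^2
        + a^4 * curvRemainder (p*(1-p)) (a^2) := by
  obtain ⟨hlo, hhi⟩ := ha
  have hc : 0 < (1-a)/(1+a) := div_pos (by linarith) (by linarith)
  obtain ⟨hF, hF', hF''⟩ := values_of_eqOn_fourAtom hp0 hp1 hf hc
  obtain ⟨U, hU⟩ : ∃ U, U = 1 - a + 2*a*p := ⟨_, rfl⟩
  obtain ⟨V, hV⟩ : ∃ V, V = 1 + a - 2*a*p := ⟨_, rfl⟩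
  obtain ⟨W, hW⟩ : ∃ W, W = 1 - (1 - 2*(p*(1-p))) * a^2 := ⟨_, rfl⟩
  have hUpos : 0 < U := by rw [hU]; nlinarith
  have hVpos : 0 < V := by rw [hV]; nlinarith
  have hWpos : 0 < W := by rw [hW]; nlinarith [sq_nonneg (2*p - 1), sq_nonneg a]
  have hne : 1 + a ≠ 0 := by linarith
  have hu : (1 - p) * ((1-a)/(1+a)) + p = U / (1+a) := by rw [hU]; field_simp; ring
  have hv : p * ((1-a)/(1+a)) + (1 - p) = V / (1+a) := by rw [hV]; field_simp; ring
  have hF1 : fourAtom p ((1-a)/(1+a)) = W / (U*V*(1+a)) := by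
    rw [fourAtom, hu, hv]; field_simp; rw [hU, hV, hW]; ring
  rw [scurv, hF, hF', hF'', hF1, fourAtomDeriv, fourAtomDeriv2, hu, hv]
  exact curvature_identity ha0 hne hU hV hW hUpos.ne' hVpos.ne' hWpos.ne'

end FourAtom

/-- for `p ∈ (0,1)` and
`f(x) = (x/4)(1/((1−p)x+p) + 1/(px+1−p) + 1/x + 1)` one has `f″(1) = −p(1−p)`,
the scalar curvature satisfies
`r(a) = (6 + 36 f″(1)) − 20p(1−p)(14p²−14p+3)·a² + O(a⁴)` as `a → 0`, and if
`(7−√7)/14 < p < (7+√7)/14` then the coefficient of `a²` is positive and `r` has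
a strict local minimum at the origin. -/
theorem stmt_18 (p : ℝ) (hp0 : 0 < p) (hp1 : p < 1)
    (f : ℝ → ℝ)
    (hf : ∀ x > (0:ℝ), f x = x/4 * (1/((1-p)*x + p) + 1/(p*x + 1 - p) + 1/x + 1)) :
    iteratedDeriv 2 f 1 = -(p*(1-p)) ∧
    ((fun a : ℝ => scurv f a - ((6 + 36 * iteratedDeriv 2 f 1)
        - 20*p*(1-p)*(14*p^2 - 14*p + 3) * a^2)) =O[𝓝[≠] (0:ℝ)] fun a => a^4) ∧
    ((7 - Real.sqrt 7)/14 < p → p < (7 + Real.sqrt 7)/14 →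
      0 < -(20*p*(1-p)*(14*p^2 - 14*p + 3)) ∧
      ∃ ε > (0:ℝ), ∀ a : ℝ, 0 < |a| → |a| < ε →
        scurv f a > 6 + 36 * iteratedDeriv 2 f 1) := by
  have hF := eqOn_fourAtom hf
  have hf1 : iteratedDeriv 2 f 1 = -(p*(1-p)) := by
    rw [(values_of_eqOn_fourAtom hp0 hp1 hF one_pos).2.2, fourAtomDeriv2]
    ring
  have hexp : (fun a : ℝ => scurv f a - ((6 + 36 * iteratedDeriv 2 f 1)
      - 20*p*(1-p)*(14*p^2 - 14*p + 3) * a^2)) =O[𝓝[≠] (0:ℝ)] fun a => a^4 := by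
    refine (isBigO_mul_of_tendsto ((continuousAt_curvRemainder (p*(1-p))).tendsto.mono_left
      nhdsWithin_le_nhds)).congr' ?_ EventuallyEq.rfl
    filter_upwards [mem_nhdsWithin_of_mem_nhds (Ioo_mem_nhds neg_one_lt_zero one_pos),
      self_mem_nhdsWithin] with a ha (ha0 : a ≠ 0)
    rw [scurv_eq_of_eqOn_fourAtom hp0 hp1 hF ha0 ha, hf1]
    ring
  refine ⟨hf1, hexp, fun hl hr => ?_⟩
  have hK : 0 < -(20*p*(1-p)*(14*p^2 - 14*p + 3)) := by
    have := mul_pos (mul_pos hp0 (sub_pos.2 hp1)) (neg_pos.2 (quadratic_neg_of_between_roots hl hr))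
    linarith
  obtain ⟨ε, hε, hmin⟩ := Metric.eventually_nhds_iff.1
    (eventually_nhdsWithin_iff.1 (eventually_lt_of_isBigO_sub_quadratic hK hexp))
  exact ⟨hK, ε, hε, fun a ha0 haε => hmin (by simpa using haε) (abs_pos.1 ha0)⟩
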